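/- For each filter π₀ there is a ShEx shape φ_{π₀} such that for every common graph G and every node v ∈ Nodes(G): G,v ⊨ φ_{π₀} if and only if (v,v) ∈ ⟦π₀⟧^G. -/
import Mathlib


/-! ### Common graphs -/

/-- Nodes. -/
abbrev GNode := ℕ
/-- Values. -/
abbrev GValue := ℕ
/-- Predicates. -/
abbrev GPred := ℕ
/-- Keys. -/
abbrev GKey := ℕ

/-- Nodes or values (the disjoint union 𝒩 ∪ 𝒱). -/
abbrev NV := GNode ⊕ GValue
/-- Predicates or keys (the disjoint union 𝒫 ∪ 𝒦). -/
abbrev PK := GPred ⊕ GKey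

/-- Triples of a common graph: edges (𝒩×𝒫×𝒩) and properties (𝒩×𝒦×𝒱). -/
inductive Triple : Type
  | edge (u : GNode) (p : GPred) (v : GNode)
  | prop (u : GNode) (k : GKey) (w : GValue)
  deriving DecidableEq

/-- A common graph: a finite set of triples such that for each node `u` and key `k`
there is at most one value `w` with `(u,k,w)` in the graph. -/
structure CommonGraph : Type where
  triples : Finset Triple
  functional : ∀ u k w w', Triple.prop u k w ∈ triples → Triple.prop u k w' ∈ triples → w = w'

/-- `(v, q, u) ∈ G`, viewed as a binary relation on `𝒩 ∪ 𝒱` for each `q ∈ 𝒫 ∪ 𝒦`. -/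
def tripleRel (G : CommonGraph) : PK → NV → NV → Prop
  | Sum.inl p, Sum.inl u, Sum.inl v => Triple.edge u p v ∈ G.triples
  | Sum.inr k, Sum.inl u, Sum.inr w => Triple.prop u k w ∈ G.triples
  | _, _, _ => False

/-- The nodes occurring in a common graph. -/
def nodesSet (G : CommonGraph) : Set GNode :=
  {u | (∃ p v, Triple.edge u p v ∈ G.triples) ∨ (∃ p v, Triple.edge v p u ∈ G.triples) ∨
       (∃ k w, Triple.prop u k w ∈ G.triples)}

/-- The values occurring in a common graph. -/
def valuesSet (G : CommonGraph) : Set GValue :=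
  {w | ∃ u k, Triple.prop u k w ∈ G.triples}

/-- `v ∈ Nodes(G) ∪ Values(G)`. -/
def inGraph (G : CommonGraph) : NV → Prop
  | Sum.inl u => u ∈ nodesSet G
  | Sum.inr w => w ∈ valuesSet G

/-- The content `ρ(u)` of a node: the record `{(k,w) | ρ(u,k) = w}`. -/
def content (G : CommonGraph) (u : GNode) : Set (GKey × GValue) :=
  {kw | Triple.prop u kw.1 kw.2 ∈ G.triples}

/-! ### Records and content types -/

/-- A record: a functional, finite set of key–value pairs
(a finite-domain partial function `𝒦 ⇀ 𝒱`). -/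
def IsRecord (r : Set (GKey × GValue)) : Prop :=
  r.Finite ∧ ∀ k w w', (k, w) ∈ r → (k, w') ∈ r → w = w'

/-- Content types `θ ::= ⊤ | {} | {k:τ} | θ&θ | θ|θ`. -/
inductive CType (VT : Type) : Type
  | top
  | emp
  | single (k : GKey) (τ : VT)
  | band (θ₁ θ₂ : CType VT)
  | bor (θ₁ θ₂ : CType VT)

/-- The semantics `⟦θ⟧` of a content type: a set of records. -/
def ctSem {VT : Type} (semVT : VT → Set GValue) : CType VT → Set (Set (GKey × GValue))
  | .top => {r | IsRecord r}
  | .emp => {(∅ : Set (GKey × GValue))}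
  | .single k τ => {r | ∃ w ∈ semVT τ, r = {(k, w)}}
  | .band θ₁ θ₂ => {r | IsRecord r ∧ ∃ r₁ ∈ ctSem semVT θ₁, ∃ r₂ ∈ ctSem semVT θ₂, r = r₁ ∪ r₂}
  | .bor θ₁ θ₂ => ctSem semVT θ₁ ∪ ctSem semVT θ₂

/-- Closed content types `ν ::= {} | {k:τ} | ν&ν | ν|ν`. -/
inductive CCType (VT : Type) : Type
  | emp
  | single (k : GKey) (τ : VT)
  | band (ν₁ ν₂ : CCType VT)
  | bor (ν₁ ν₂ : CCType VT)

/-- A closed content type is in particular a content type. -/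
def CCType.toCT {VT : Type} : CCType VT → CType VT
  | .emp => .emp
  | .single k τ => .single k τ
  | .band ν₁ ν₂ => .band ν₁.toCT ν₂.toCT
  | .bor ν₁ ν₂ => .bor ν₁.toCT ν₂.toCT

/-- Open content types: `⊤` or `ν & ⊤` with `ν` closed. -/
inductive OpenCT (VT : Type) : Type
  | top
  | opn (ν : CCType VT)

/-- An open content type as a content type. -/
def OpenCT.toCT {VT : Type} : OpenCT VT → CType VT
  | .top => .top
  | .opn ν => .band ν.toCT .top

/-! ### ShEx -/

/-- Possibly marked triples `(v, q, v')` / `(v, q⁻, v')` (with `inv = true` for marked). -/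
structure STriple : Type where
  src : NV
  sym : PK
  inv : Bool
  tgt : NV
  deriving DecidableEq

/-- Well-typedness of a possibly marked triple, i.e. membership in `ℰ ∪ ℰ⁻` where
`ℰ = 𝒩×𝒫×𝒩 ∪ 𝒩×𝒦×𝒱` and `ℰ⁻ = 𝒩×𝒫⁻×𝒩 ∪ 𝒱×𝒦⁻×𝒩`. -/
def STriple.wellTyped : STriple → Prop
  | ⟨a, Sum.inl _, false, b⟩ => (∃ u, a = Sum.inl u) ∧ (∃ v, b = Sum.inl v)
  | ⟨a, Sum.inr _, false, b⟩ => (∃ u, a = Sum.inl u) ∧ (∃ w, b = Sum.inr w)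
  | ⟨a, Sum.inl _, true, b⟩ => (∃ u, a = Sum.inl u) ∧ (∃ v, b = Sum.inl v)
  | ⟨a, Sum.inr _, true, b⟩ => (∃ w, a = Sum.inr w) ∧ (∃ v, b = Sum.inl v)

/-- The signed neighbourhood `Neigh±_G(v)`. -/
def neighPM (G : CommonGraph) (v : NV) : Set STriple :=
  {t | (t.inv = false ∧ t.src = v ∧ tripleRel G t.sym v t.tgt) ∨
       (t.inv = true ∧ t.src = v ∧ tripleRel G t.sym t.tgt v)}

mutual
/-- ShEx shapes. -/
inductive ShExShape (VT : Type) : Type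
  | testC (c : GValue)
  | testT (τ : VT)
  /-- the half-open form `⟨e ; (¬R⁻)*⟩` -/
  | neighHalf (e : TExpr VT) (R : Finset PK)
  /-- the open form `⟨e ; (¬R⁻)* ; (¬Q)*⟩` -/
  | neighOpen (e : TExpr VT) (R : Finset PK) (Q : Finset PK)
  | and (φ₁ φ₂ : ShExShape VT)
  | or (φ₁ φ₂ : ShExShape VT)
  | not (φ : ShExShape VT)

/-- ShEx closed triple expressions. -/
inductive TExpr (VT : Type) : Type
  | eps
  | fwd (q : PK) (φ : ShExShape VT)
  | bwd (q : PK) (φ : ShExShape VT)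
  | seq (e₁ e₂ : TExpr VT)
  | alt (e₁ e₂ : TExpr VT)
  | star (e : TExpr VT)
end

/-- `⟦e₁ ; e₂⟧`: disjoint unions. -/
def seqSem (A B : Set (Set STriple)) : Set (Set STriple) :=
  {T | ∃ T₁ ∈ A, ∃ T₂ ∈ B, T₁ ∩ T₂ = ∅ ∧ T = T₁ ∪ T₂}

/-- `⟦e*⟧`: finite unions of pairwise disjoint members (the empty union included). -/
def starSem (A : Set (Set STriple)) : Set (Set STriple) :=
  {T | ∃ l : List (Set STriple), (∀ X ∈ l, X ∈ A) ∧
        l.Pairwise (fun X Y => X ∩ Y = ∅) ∧ T = l.foldr (· ∪ ·) ∅}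

/-- `⟦¬Q⟧` (for `b = false`) resp. `⟦¬Q⁻⟧` (for `b = true`) at focus `v`:
all singletons of (well-typed) unmarked resp. marked triples with symbol outside `Q`. -/
def negSem (v : NV) (Q : Finset PK) (b : Bool) : Set (Set STriple) :=
  {T | ∃ t : STriple, t.wellTyped ∧ t.src = v ∧ t.inv = b ∧ t.sym ∉ Q ∧ T = {t}}

mutual
/-- Satisfaction of ShEx shapes: `G, v ⊨ φ`. -/
def shexSat {VT : Type} (semVT : VT → Set GValue) (G : CommonGraph) : NV → ShExShape VT → Prop
  | v, .testC c => v = Sum.inr c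
  | v, .testT τ => ∃ w, v = Sum.inr w ∧ w ∈ semVT τ
  | v, .neighHalf e R =>
      neighPM G v ∈ seqSem (teSem semVT G v e) (starSem (negSem v R true))
  | v, .neighOpen e R Q =>
      neighPM G v ∈
        seqSem (seqSem (teSem semVT G v e) (starSem (negSem v R true))) (starSem (negSem v Q false))
  | v, .and φ₁ φ₂ => shexSat semVT G v φ₁ ∧ shexSat semVT G v φ₂
  | v, .or φ₁ φ₂ => shexSat semVT G v φ₁ ∨ shexSat semVT G v φ₂
  | v, .not φ => ¬ shexSat semVT G v φ

/-- The semantics `⟦e⟧_v^G` of closed triple expressions. -/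
def teSem {VT : Type} (semVT : VT → Set GValue) (G : CommonGraph) : NV → TExpr VT → Set (Set STriple)
  | _, .eps => {(∅ : Set STriple)}
  | v, .fwd q φ =>
      {T | ∃ t : STriple, t.wellTyped ∧ t.src = v ∧ t.sym = q ∧ t.inv = false ∧
            shexSat semVT G t.tgt φ ∧ T = {t}}
  | v, .bwd q φ =>
      {T | ∃ t : STriple, t.wellTyped ∧ t.src = v ∧ t.sym = q ∧ t.inv = true ∧
            shexSat semVT G t.tgt φ ∧ T = {t}}
  | v, .seq e₁ e₂ => seqSem (teSem semVT G v e₁) (teSem semVT G v e₂)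
  | v, .alt e₁ e₂ => teSem semVT G v e₁ ∪ teSem semVT G v e₂
  | v, .star e => starSem (teSem semVT G v e)
end

/-- The open triple expression `⊤ = ε ; (¬∅⁻)* ; (¬∅)*` as a shape. -/
def shexTop {VT : Type} : ShExShape VT := .neighOpen .eps ∅ ∅

/-- ShEx selectors: `test(c)`, `⟨q.test(c) ; ⊤⟩`, `⟨q.⟨⊤⟩ ; ⊤⟩`, `⟨q⁻.⟨⊤⟩ ; ⊤⟩`. -/
def IsShExSelector {VT : Type} (φ : ShExShape VT) : Prop :=
  (∃ c, φ = ShExShape.testC c) ∨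
  (∃ q c, φ = ShExShape.neighOpen (TExpr.fwd q (ShExShape.testC c)) ∅ ∅) ∨
  (∃ q, φ = ShExShape.neighOpen (TExpr.fwd q shexTop) ∅ ∅) ∨
  (∃ q, φ = ShExShape.neighOpen (TExpr.bwd q shexTop) ∅ ∅)

/-- A ShEx schema: a finite set of selector–shape pairs. -/
structure ShExSchema (VT : Type) : Type where
  pairs : Finset (ShExShape VT × ShExShape VT)
  sel : ∀ pr ∈ pairs, IsShExSelector pr.1

/-- Validity of a common graph w.r.t. a ShEx schema. -/
def shexValid {VT : Type} (semVT : VT → Set GValue) (S : ShExSchema VT) (G : CommonGraph) : Prop :=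
  ∀ v : NV, ∀ pr ∈ S.pairs, shexSat semVT G v pr.1 → shexSat semVT G v pr.2

/-! ### CoGSL filters -/

/-- Filters `π₀ ::= (k:c) | ¬(k:c) | ν&⊤ | ¬(ν&⊤) | π₀·π₀` (with `ν` a closed content type). -/
inductive GFilter (VT : Type) : Type
  | keyIs (k : GKey) (c : GValue)
  | keyIsNot (k : GKey) (c : GValue)
  | openCT (ν : CCType VT)
  | notOpenCT (ν : CCType VT)
  | comp (f₁ f₂ : GFilter VT)

/-- The semantics `⟦π₀⟧^G` of a filter, as a binary relation on `𝒩 ∪ 𝒱`. -/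
def cfilterSem {VT : Type} (semVT : VT → Set GValue) (G : CommonGraph) :
    GFilter VT → NV → NV → Prop
  | .keyIs k c => fun a b =>
      a = b ∧ ∃ u, a = Sum.inl u ∧ u ∈ nodesSet G ∧ Triple.prop u k c ∈ G.triples
  | .keyIsNot k c => fun a b =>
      a = b ∧ ∃ u, a = Sum.inl u ∧ u ∈ nodesSet G ∧ Triple.prop u k c ∉ G.triples
  | .openCT ν => fun a b =>
      a = b ∧ ∃ u, a = Sum.inl u ∧ u ∈ nodesSet G ∧
        content G u ∈ ctSem semVT (CType.band ν.toCT CType.top)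
  | .notOpenCT ν => fun a b =>
      a = b ∧ ∃ u, a = Sum.inl u ∧ u ∈ nodesSet G ∧
        content G u ∉ ctSem semVT (CType.band ν.toCT CType.top)
  | .comp f₁ f₂ => fun a b => ∃ c, cfilterSem semVT G f₁ a c ∧ cfilterSem semVT G f₂ c b


/-! ### Auxiliary material for the proof of Statement 12 -/

section FilterProof

variable {VT : Type}

/-- Candidate signed triples arising from a graph triple, at focus `v`. -/
def candSet (v : NV) : Triple → Finset STriple
  | .edge u p w => {⟨v, .inl p, false, .inl w⟩, ⟨v, .inl p, true, .inl u⟩}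
  | .prop u k w => {⟨v, .inr k, false, .inr w⟩, ⟨v, .inr k, true, .inl u⟩}

lemma neighPM_finite (G : CommonGraph) (v : NV) : (neighPM G v).Finite := by
  apply Set.Finite.subset (Set.Finite.biUnion G.triples.finite_toSet
    (fun tr _ => (candSet v tr).finite_toSet))
  rintro ⟨a, q, iv, c⟩ ht
  rcases ht with ⟨hb, hs, hrel⟩ | ⟨hb, hs, hrel⟩ <;> dsimp only at hb hs hrel <;>
    subst hb <;> subst hs <;>
    rcases q with p | k <;> rcases a with u | w <;> rcases c with u' | w' <;>
      simp only [tripleRel] at hrel <;>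
      exact Set.mem_biUnion (Finset.mem_coe.mpr hrel) (by simp [candSet])

lemma mem_neighPM_props {G : CommonGraph} {v : NV} {t : STriple} (ht : t ∈ neighPM G v) :
    t.wellTyped ∧ t.src = v := by
  obtain ⟨a, q, iv, c⟩ := t
  rcases ht with ⟨hb, hs, hrel⟩ | ⟨hb, hs, hrel⟩ <;> dsimp only at hb hs hrel <;>
    subst hb <;> subst hs <;>
    rcases q with p | k <;> rcases a with u | w <;> rcases c with u' | w' <;>
      simp only [tripleRel] at hrel <;>
      exact ⟨⟨⟨_, rfl⟩, ⟨_, rfl⟩⟩, rfl⟩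

lemma foldr_union_map_singleton (l : List STriple) :
    (l.map (fun t => ({t} : Set STriple))).foldr (· ∪ ·) ∅ = {x | x ∈ l} := by
  induction l with
  | nil => simp
  | cons a l ih => ext x; simp [ih]

lemma mem_starSem (v : NV) (Q : Finset PK) (b : Bool) {T : Set STriple} (hfin : T.Finite)
    (h : ∀ t ∈ T, t.wellTyped ∧ t.src = v ∧ t.inv = b ∧ t.sym ∉ Q) :
    T ∈ starSem (negSem v Q b) := by
  refine ⟨hfin.toFinset.toList.map (fun t => {t}), ?_, ?_, ?_⟩
  · rintro X hX
    simp only [List.mem_map] at hX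
    obtain ⟨t, ht, rfl⟩ := hX
    have ht' : t ∈ T := by
      rw [← hfin.mem_toFinset, ← Finset.mem_toList]; exact ht
    obtain ⟨h1, h2, h3, h4⟩ := h t ht'
    exact ⟨t, h1, h2, h3, h4, rfl⟩
  · exact List.Pairwise.map _
      (fun a b hab => by simp [Set.singleton_inter_eq_empty]; exact fun h => hab h.symm) hfin.toFinset.nodup_toList
  · rw [foldr_union_map_singleton]
    ext x
    simp [Finset.mem_toList, Set.Finite.mem_toFinset]

lemma sat_open_fwd (semVT : VT → Set GValue) (G : CommonGraph) (v : GNode) (k : GKey)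
    (ψ : ShExShape VT) :
    shexSat semVT G (Sum.inl v) (.neighOpen (.fwd (Sum.inr k) ψ) ∅ ∅) ↔
      ∃ w, Triple.prop v k w ∈ G.triples ∧ shexSat semVT G (Sum.inr w) ψ := by
  rw [shexSat]
  constructor
  · rintro ⟨T12, ⟨T1, hT1, T2, hT2, -, rfl⟩, T3, hT3, -, hN⟩
    simp only [teSem, Set.mem_setOf_eq] at hT1
    obtain ⟨⟨a, q, iv, c⟩, htw, hsrc, hsym, hinv, hψ, rfl⟩ := hT1
    dsimp only at hsrc hsym hinv hψ
    subst hsrc; subst hsym; subst hinv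
    have htm : (⟨Sum.inl v, Sum.inr k, false, c⟩ : STriple) ∈ neighPM G (Sum.inl v) := by
      rw [hN]; exact Or.inl (Or.inl rfl)
    rcases htm with ⟨-, -, hrel⟩ | ⟨hb, -, -⟩
    · rcases c with u' | w
      · simp only [tripleRel] at hrel
      · simp only [tripleRel] at hrel
        exact ⟨w, hrel, hψ⟩
    · simp at hb
  · rintro ⟨w, hw, hψ⟩
    have ht0N : (⟨Sum.inl v, Sum.inr k, false, Sum.inr w⟩ : STriple) ∈ neighPM G (Sum.inl v) :=
      Or.inl ⟨rfl, rfl, hw⟩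
    set t0 : STriple := ⟨Sum.inl v, Sum.inr k, false, Sum.inr w⟩ with ht0
    set N := neighPM G (Sum.inl v) with hNdef
    refine ⟨{t0} ∪ {t ∈ N | t.inv = true}, ⟨{t0}, ?_, {t ∈ N | t.inv = true}, ?_, ?_, rfl⟩,
      {t ∈ N | t.inv = false} \ {t0}, ?_, ?_, ?_⟩
    · exact ⟨t0, ⟨⟨v, rfl⟩, ⟨w, rfl⟩⟩, rfl, rfl, rfl, hψ, rfl⟩
    · apply mem_starSem
      · exact (neighPM_finite G _).subset (Set.sep_subset _ _)
      · rintro t ⟨htN, hti⟩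
        obtain ⟨h1, h2⟩ := mem_neighPM_props htN
        exact ⟨h1, h2, hti, by simp⟩
    · rw [Set.eq_empty_iff_forall_notMem]
      rintro x ⟨hx1, -, hx2⟩
      rw [Set.mem_singleton_iff] at hx1
      subst hx1
      simp [ht0] at hx2
    · apply mem_starSem
      · exact ((neighPM_finite G _).subset (Set.sep_subset _ _)).subset
          (Set.diff_subset)
      · rintro t ⟨⟨htN, hti⟩, -⟩
        obtain ⟨h1, h2⟩ := mem_neighPM_props htN
        exact ⟨h1, h2, hti, by simp⟩
    · rw [Set.eq_empty_iff_forall_notMem]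
      rintro x ⟨hx1, ⟨-, hx3⟩, hx4⟩
      rcases hx1 with hx1 | ⟨-, hx2⟩
      · exact hx4 hx1
      · rw [hx2] at hx3; simp at hx3
    · ext x
      constructor
      · intro hx
        rcases Bool.eq_false_or_eq_true x.inv with hb | hb
        · exact Or.inl (Or.inr ⟨hx, hb⟩)
        · by_cases hxe : x = t0
          · exact Or.inl (Or.inl hxe)
          · exact Or.inr ⟨⟨hx, hb⟩, hxe⟩
      · rintro ((hx | ⟨hx, -⟩) | ⟨⟨hx, -⟩, -⟩)
        · rw [Set.mem_singleton_iff] at hx; rw [hx]; exact ht0N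
        · exact hx
        · exact hx

end FilterProof


section FilterProof2

variable {VT : Type}

lemma content_isRecord (G : CommonGraph) (u : GNode) : IsRecord (content G u) := by
  constructor
  · apply Set.Finite.subset (G.triples.finite_toSet.image
      (fun tr => match tr with | .prop _ k w => (k, w) | .edge _ _ _ => (0, 0)))
    rintro ⟨k, w⟩ hkw
    exact ⟨Triple.prop u k w, hkw, rfl⟩
  · intro k w w' h h'
    exact G.functional u k w w' h h'

lemma isRecord_subset {r s : Set (GKey × GValue)} (hr : IsRecord r) (hs : s ⊆ r) : IsRecord s :=
  ⟨hr.1.subset hs, fun k w w' h h' => hr.2 k w w' (hs h) (hs h')⟩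

/-- Disjunctive normal form of a closed content type. -/
def dnf : CCType VT → List (List (GKey × VT))
  | .emp => [[]]
  | .single k τ => [[(k, τ)]]
  | .band ν₁ ν₂ => (dnf ν₁).flatMap (fun L₁ => (dnf ν₂).map (fun L₂ => L₁ ++ L₂))
  | .bor ν₁ ν₂ => dnf ν₁ ++ dnf ν₂

lemma ct_to_dnf (semVT : VT → Set GValue) {ν : CCType VT} {r₁ : Set (GKey × GValue)}
    (h : r₁ ∈ ctSem semVT ν.toCT) :
    ∃ L ∈ dnf ν, ∀ p ∈ L, ∃ w ∈ semVT p.2, (p.1, w) ∈ r₁ := by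
  induction ν generalizing r₁ with
  | emp =>
    exact ⟨[], by simp [dnf], by simp⟩
  | single k τ =>
    simp only [CCType.toCT, ctSem, Set.mem_setOf_eq] at h
    obtain ⟨w, hw, rfl⟩ := h
    refine ⟨[(k, τ)], by simp [dnf], ?_⟩
    rintro p hp
    simp only [List.mem_singleton] at hp
    subst hp
    exact ⟨w, hw, rfl⟩
  | band ν₁ ν₂ ih₁ ih₂ =>
    simp only [CCType.toCT, ctSem, Set.mem_setOf_eq] at h
    obtain ⟨-, s₁, hs₁, s₂, hs₂, rfl⟩ := h
    obtain ⟨L₁, hL₁, h₁⟩ := ih₁ hs₁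
    obtain ⟨L₂, hL₂, h₂⟩ := ih₂ hs₂
    refine ⟨L₁ ++ L₂, ?_, ?_⟩
    · simp only [dnf, List.mem_flatMap, List.mem_map]
      exact ⟨L₁, hL₁, L₂, hL₂, rfl⟩
    · intro p hp
      rcases List.mem_append.mp hp with hp | hp
      · obtain ⟨w, hw, hmem⟩ := h₁ p hp; exact ⟨w, hw, Or.inl hmem⟩
      · obtain ⟨w, hw, hmem⟩ := h₂ p hp; exact ⟨w, hw, Or.inr hmem⟩
  | bor ν₁ ν₂ ih₁ ih₂ =>
    rcases h with h | h
    · obtain ⟨L, hL, hh⟩ := ih₁ h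
      exact ⟨L, by simp [dnf, hL], hh⟩
    · obtain ⟨L, hL, hh⟩ := ih₂ h
      exact ⟨L, by simp [dnf, hL], hh⟩

lemma dnf_to_ct (semVT : VT → Set GValue) {r : Set (GKey × GValue)} (hr : IsRecord r)
    {ν : CCType VT} {L : List (GKey × VT)} (hL : L ∈ dnf ν)
    (h : ∀ p ∈ L, ∃ w ∈ semVT p.2, (p.1, w) ∈ r) :
    ∃ r₁ ∈ ctSem semVT ν.toCT, r₁ ⊆ r := by
  induction ν generalizing L with
  | emp =>
    exact ⟨∅, rfl, Set.empty_subset r⟩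
  | single k τ =>
    simp only [dnf, List.mem_singleton] at hL
    subst hL
    obtain ⟨w, hw, hmem⟩ := h (k, τ) (by simp)
    exact ⟨{(k, w)}, ⟨w, hw, rfl⟩, by simpa using hmem⟩
  | band ν₁ ν₂ ih₁ ih₂ =>
    simp only [dnf, List.mem_flatMap, List.mem_map] at hL
    obtain ⟨L₁, hL₁, L₂, hL₂, rfl⟩ := hL
    obtain ⟨r₁, hr₁, hsub₁⟩ := ih₁ hL₁ (fun p hp => h p (List.mem_append.mpr (Or.inl hp)))
    obtain ⟨r₂, hr₂, hsub₂⟩ := ih₂ hL₂ (fun p hp => h p (List.mem_append.mpr (Or.inr hp)))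
    exact ⟨r₁ ∪ r₂, ⟨isRecord_subset hr (Set.union_subset hsub₁ hsub₂), r₁, hr₁, r₂, hr₂, rfl⟩,
      Set.union_subset hsub₁ hsub₂⟩
  | bor ν₁ ν₂ ih₁ ih₂ =>
    rcases List.mem_append.mp hL with hL | hL
    · obtain ⟨r₁, hr₁, hs⟩ := ih₁ hL h; exact ⟨r₁, Or.inl hr₁, hs⟩
    · obtain ⟨r₁, hr₁, hs⟩ := ih₂ hL h; exact ⟨r₁, Or.inr hr₁, hs⟩

lemma openCT_iff (semVT : VT → Set GValue) (G : CommonGraph) (v : GNode) (ν : CCType VT) :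
    content G v ∈ ctSem semVT (CType.band ν.toCT CType.top) ↔
      ∃ L ∈ dnf ν, ∀ p ∈ L, ∃ w ∈ semVT p.2, Triple.prop v p.1 w ∈ G.triples := by
  constructor
  · rintro ⟨-, r₁, hr₁, r₂, -, heq⟩
    obtain ⟨L, hL, h⟩ := ct_to_dnf semVT hr₁
    refine ⟨L, hL, fun p hp => ?_⟩
    obtain ⟨w, hw, hmem⟩ := h p hp
    have hc : (p.1, w) ∈ content G v := by
      rw [heq]; exact Set.mem_union_left _ hmem
    exact ⟨w, hw, hc⟩
  · rintro ⟨L, hL, h⟩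
    obtain ⟨r₁, hr₁, hsub⟩ := dnf_to_ct semVT (content_isRecord G v) hL h
    exact ⟨content_isRecord G v, r₁, hr₁, content G v, content_isRecord G v,
      (Set.union_eq_right.mpr hsub).symm⟩

/-- The always-true shape. -/
def trueShape : ShExShape VT := .or (.testC 0) (.not (.testC 0))
/-- The always-false shape. -/
def falseShape : ShExShape VT := .and (.testC 0) (.not (.testC 0))
/-- Finite conjunction of shapes. -/
def bigAnd (l : List (ShExShape VT)) : ShExShape VT := l.foldr .and trueShape
/-- Finite disjunction of shapes. -/
def bigOr (l : List (ShExShape VT)) : ShExShape VT := l.foldr .or falseShape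

lemma sat_bigAnd (semVT : VT → Set GValue) (G : CommonGraph) (v : NV)
    (l : List (ShExShape VT)) :
    shexSat semVT G v (bigAnd l) ↔ ∀ φ ∈ l, shexSat semVT G v φ := by
  induction l with
  | nil =>
    constructor
    · intro _ φ hφ; simp at hφ
    · intro _
      show shexSat semVT G v (.or (.testC 0) (.not (.testC 0)))
      rw [shexSat]
      by_cases h : shexSat semVT G v (.testC 0)
      · exact Or.inl h
      · exact Or.inr (by rw [shexSat]; exact h)
  | cons a l ih =>
    show shexSat semVT G v (.and a (bigAnd l)) ↔ _
    rw [shexSat, ih]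
    simp

lemma sat_bigOr (semVT : VT → Set GValue) (G : CommonGraph) (v : NV)
    (l : List (ShExShape VT)) :
    shexSat semVT G v (bigOr l) ↔ ∃ φ ∈ l, shexSat semVT G v φ := by
  induction l with
  | nil =>
    constructor
    · intro h
      exfalso
      have h' : shexSat semVT G v (.and (.testC 0) (.not (.testC 0))) := h
      rw [shexSat] at h'
      obtain ⟨h1, h2⟩ := h'
      rw [shexSat] at h2
      exact h2 h1
    · rintro ⟨φ, hφ, -⟩; simp at hφ
  | cons a l ih =>
    show shexSat semVT G v (.or a (bigOr l)) ↔ _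
    rw [shexSat, ih]
    simp

/-- `⟨k.test(c) ; ⊤⟩`. -/
def hasKeyVal (k : GKey) (c : GValue) : ShExShape VT :=
  .neighOpen (.fwd (Sum.inr k) (.testC c)) ∅ ∅
/-- `⟨k.test(τ) ; ⊤⟩`. -/
def hasKeyType (k : GKey) (τ : VT) : ShExShape VT :=
  .neighOpen (.fwd (Sum.inr k) (.testT τ)) ∅ ∅
/-- The shape expressing `ν & ⊤`. -/
def ctShape (ν : CCType VT) : ShExShape VT :=
  bigOr ((dnf ν).map (fun L => bigAnd (L.map (fun p => hasKeyType p.1 p.2))))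

lemma sat_hasKeyVal (semVT : VT → Set GValue) (G : CommonGraph) (v : GNode) (k : GKey)
    (c : GValue) :
    shexSat semVT G (Sum.inl v) (hasKeyVal k c) ↔ Triple.prop v k c ∈ G.triples := by
  rw [hasKeyVal, sat_open_fwd]
  constructor
  · rintro ⟨w, hw, hsat⟩
    rw [shexSat] at hsat
    rw [Sum.inr.injEq] at hsat
    subst hsat
    exact hw
  · intro h
    exact ⟨c, h, by rw [shexSat]⟩

lemma sat_ctShape (semVT : VT → Set GValue) (G : CommonGraph) (v : GNode) (ν : CCType VT) :
    shexSat semVT G (Sum.inl v) (ctShape ν) ↔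
      content G v ∈ ctSem semVT (CType.band ν.toCT CType.top) := by
  rw [openCT_iff, ctShape, sat_bigOr]
  constructor
  · rintro ⟨φ, hφ, hsat⟩
    simp only [List.mem_map] at hφ
    obtain ⟨L, hL, rfl⟩ := hφ
    rw [sat_bigAnd] at hsat
    refine ⟨L, hL, fun p hp => ?_⟩
    have hs := hsat _ (List.mem_map.mpr ⟨p, hp, rfl⟩)
    rw [hasKeyType, sat_open_fwd] at hs
    obtain ⟨w, hw, hsat'⟩ := hs
    rw [shexSat] at hsat'
    obtain ⟨w', hww', hw'⟩ := hsat'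
    rw [Sum.inr.injEq] at hww'
    subst hww'
    exact ⟨w, hw', hw⟩
  · rintro ⟨L, hL, h⟩
    refine ⟨_, List.mem_map.mpr ⟨L, hL, rfl⟩, ?_⟩
    rw [sat_bigAnd]
    rintro φ hφ
    simp only [List.mem_map] at hφ
    obtain ⟨p, hp, rfl⟩ := hφ
    obtain ⟨w, hw, hmem⟩ := h p hp
    rw [hasKeyType, sat_open_fwd]
    refine ⟨w, hmem, ?_⟩
    rw [shexSat]
    exact ⟨w, rfl, hw⟩

lemma cfilter_diag (semVT : VT → Set GValue) (G : CommonGraph) {f : GFilter VT} {a b : NV}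
    (h : cfilterSem semVT G f a b) : a = b := by
  induction f generalizing a b with
  | keyIs k c => exact h.1
  | keyIsNot k c => exact h.1
  | openCT ν => exact h.1
  | notOpenCT ν => exact h.1
  | comp f₁ f₂ ih₁ ih₂ =>
    obtain ⟨c, h₁, h₂⟩ := h
    exact (ih₁ h₁).trans (ih₂ h₂)

end FilterProof2

/-- For each filter `π₀` there is a ShEx shape `φ_{π₀}` such that for
every common graph `G` and node `v` of `G`: `G, v ⊨ φ_{π₀}` iff `(v,v) ∈ ⟦π₀⟧^G`. -/
theorem filter_expressible_in_shex
    (VT : Type) (semVT : VT → Set GValue) (f : GFilter VT) :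
    ∃ φ : ShExShape VT, ∀ (G : CommonGraph) (v : GNode), v ∈ nodesSet G →
      (shexSat semVT G (Sum.inl v) φ ↔ cfilterSem semVT G f (Sum.inl v) (Sum.inl v)) := by
  induction f with
  | keyIs k c =>
    refine ⟨hasKeyVal k c, fun G v hv => ?_⟩
    rw [sat_hasKeyVal]
    constructor
    · intro h
      exact ⟨rfl, v, rfl, hv, h⟩
    · rintro ⟨-, u, hu, -, hc⟩
      rw [Sum.inl.injEq] at hu
      subst hu
      exact hc
  | keyIsNot k c =>
    refine ⟨.not (hasKeyVal k c), fun G v hv => ?_⟩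
    rw [shexSat, sat_hasKeyVal]
    constructor
    · intro h
      exact ⟨rfl, v, rfl, hv, h⟩
    · rintro ⟨-, u, hu, -, hc⟩
      rw [Sum.inl.injEq] at hu
      subst hu
      exact hc
  | openCT ν =>
    refine ⟨ctShape ν, fun G v hv => ?_⟩
    rw [sat_ctShape]
    constructor
    · intro h
      exact ⟨rfl, v, rfl, hv, h⟩
    · rintro ⟨-, u, hu, -, hc⟩
      rw [Sum.inl.injEq] at hu
      subst hu
      exact hc
  | notOpenCT ν =>
    refine ⟨.not (ctShape ν), fun G v hv => ?_⟩
    rw [shexSat, sat_ctShape]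
    constructor
    · intro h
      exact ⟨rfl, v, rfl, hv, h⟩
    · rintro ⟨-, u, hu, -, hc⟩
      rw [Sum.inl.injEq] at hu
      subst hu
      exact hc
  | comp f₁ f₂ ih₁ ih₂ =>
    obtain ⟨φ₁, h₁⟩ := ih₁
    obtain ⟨φ₂, h₂⟩ := ih₂
    refine ⟨.and φ₁ φ₂, fun G v hv => ?_⟩
    rw [shexSat, h₁ G v hv, h₂ G v hv]
    constructor
    · rintro ⟨ha, hb⟩
      exact ⟨Sum.inl v, ha, hb⟩
    · rintro ⟨c, ha, hb⟩
      have hd := cfilter_diag semVT G ha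
      subst hd
      exact ⟨ha, hb⟩
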